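/- arXiv:1601.06530 — 9 statements merged into one kernel-verified Lean document; each statement's English description precedes it below -/
import Mathlib

section
/- Given two sequences of real numbers (κ_k)_{k∈ℤ} and (κ̄_k)_{k∈ℤ} with κ_k ≠ 0 and κ̄_k ≠ 0 for all k, there exists a nondegenerate discrete planar curve r : ℤ → ℝ² whose first and second centroaffine curvatures at k are κ_k and κ̄_k for every k ∈ ℤ. -/
/-!
The tangents of such a curve satisfy `t (k + 1) = κbar k • t k - κ k • t (k - 1)`, and conversely
any solution of this recurrence has curvatures `κ`, `κbar`, since
`det (t k) (t (k + 1)) = κ k * det (t (k - 1)) (t k)` and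
`det (t (k - 1)) (t (k + 1)) = κbar k * det (t (k - 1)) (t k)`.
As `κ k ≠ 0`, the step `(t (k - 1), t k) ↦ (t k, t (k + 1))` is invertible, so the recurrence can be
run in both directions from the standard basis; the first identity then propagates
nondegeneracy to all `k`, and the curve is recovered by summing its tangents.
-/

/-- Planar determinant of two vectors in ℝ². -/
def det2 (u v : Fin 2 → ℝ) : ℝ := u 0 * v 1 - u 1 * v 0

/-- Edge tangent vector of a discrete planar curve. -/
def tang2 (r : ℤ → Fin 2 → ℝ) (k : ℤ) : Fin 2 → ℝ := r (k + 1) - r k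

/-- Nondegeneracy of a discrete planar curve. -/
def Nondeg2 (r : ℤ → Fin 2 → ℝ) : Prop :=
  ∀ k : ℤ, det2 (tang2 r (k - 1)) (tang2 r k) ≠ 0

/-- First centroaffine curvature. -/
noncomputable def kappa2 (r : ℤ → Fin 2 → ℝ) (k : ℤ) : ℝ :=
  det2 (tang2 r k) (tang2 r (k + 1)) / det2 (tang2 r (k - 1)) (tang2 r k)

/-- Second centroaffine curvature. -/
noncomputable def kbar2 (r : ℤ → Fin 2 → ℝ) (k : ℤ) : ℝ :=
  det2 (tang2 r (k - 1)) (tang2 r (k + 1)) / det2 (tang2 r (k - 1)) (tang2 r k)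

section EquivSeq

variable {α : Type*} (e : ℤ → α ≃ α) (a : α)

def equivSeqNat : ℕ → α
  | 0 => a
  | n + 1 => e n (equivSeqNat n)

/-- `equivSeqNeg e a n` is the value at `-(n + 1)`. -/
def equivSeqNeg : ℕ → α
  | 0 => (e (-1)).symm a
  | n + 1 => (e (Int.negSucc (n + 1))).symm (equivSeqNeg n)

def equivSeq : ℤ → α
  | .ofNat n => equivSeqNat e a n
  | .negSucc n => equivSeqNeg e a n

theorem equivSeq_zero : equivSeq e a 0 = a := rfl

theorem equivSeq_succ (k : ℤ) : equivSeq e a (k + 1) = e k (equivSeq e a k) := by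
  rcases k with n | (_ | n)
  · rfl
  · exact ((e (-1)).apply_symm_apply a).symm
  · exact ((e (Int.negSucc (n + 1))).apply_symm_apply _).symm

end EquivSeq

theorem exists_int_seq_succ_eq {α : Type*} (e : ℤ → α ≃ α) (a : α) :
    ∃ s : ℤ → α, s 0 = a ∧ ∀ k, s (k + 1) = e k (s k) :=
  ⟨equivSeq e a, equivSeq_zero e a, equivSeq_succ e a⟩

theorem exists_tang2_eq (t : ℤ → Fin 2 → ℝ) : ∃ r : ℤ → Fin 2 → ℝ, tang2 r = t := by
  obtain ⟨r, -, hr⟩ := exists_int_seq_succ_eq (fun k ↦ Equiv.addRight (t k)) 0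
  exact ⟨r, funext fun k ↦ by simp [tang2, hr]⟩

noncomputable def recurrenceStep {a : ℝ} (ha : a ≠ 0) (b : ℝ) :
    (Fin 2 → ℝ) × (Fin 2 → ℝ) ≃ (Fin 2 → ℝ) × (Fin 2 → ℝ) where
  toFun p := (p.2, b • p.2 - a • p.1)
  invFun p := (a⁻¹ • (b • p.1 - p.2), p.1)
  left_inv p := by simp [inv_smul_smul₀ ha]
  right_inv p := by simp [smul_inv_smul₀ ha]

theorem exists_recurrence {κ : ℤ → ℝ} (hκ : ∀ k, κ k ≠ 0) (κbar : ℤ → ℝ) :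
    ∃ t : ℤ → Fin 2 → ℝ, det2 (t (-1)) (t 0) ≠ 0 ∧
      ∀ k, t (k + 1) = κbar k • t k - κ k • t (k - 1) := by
  obtain ⟨s, hs0, hs⟩ :=
    exists_int_seq_succ_eq (fun k ↦ recurrenceStep (hκ k) (κbar k)) (![1, 0], ![0, 1])
  have hfst (k : ℤ) : (s k).1 = (s (k - 1)).2 := by
    simpa [recurrenceStep] using congrArg Prod.fst (hs (k - 1))
  refine ⟨fun k ↦ (s k).2, ?_, fun k ↦ ?_⟩
  · have h : (s (-1)).2 = (s 0).1 := (hfst 0).symm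
    simp [h, hs0, det2]
  · simpa [recurrenceStep, hfst k] using congrArg Prod.snd (hs k)

section Recurrence

variable {κ κbar : ℤ → ℝ} {t : ℤ → Fin 2 → ℝ}

theorem det2_succ_of_recurrence (ht : ∀ k, t (k + 1) = κbar k • t k - κ k • t (k - 1)) (k : ℤ) :
    det2 (t k) (t (k + 1)) = κ k * det2 (t (k - 1)) (t k) := by
  simp only [ht k, det2, Pi.sub_apply, Pi.smul_apply, smul_eq_mul]
  ring

theorem det2_pred_succ_of_recurrence
    (ht : ∀ k, t (k + 1) = κbar k • t k - κ k • t (k - 1)) (k : ℤ) :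
    det2 (t (k - 1)) (t (k + 1)) = κbar k * det2 (t (k - 1)) (t k) := by
  simp only [ht k, det2, Pi.sub_apply, Pi.smul_apply, smul_eq_mul]
  ring

theorem det2_ne_zero_of_recurrence (hκ : ∀ k, κ k ≠ 0)
    (ht : ∀ k, t (k + 1) = κbar k • t k - κ k • t (k - 1)) (h0 : det2 (t (-1)) (t 0) ≠ 0)
    (k : ℤ) : det2 (t (k - 1)) (t k) ≠ 0 := by
  induction k using Int.induction_on with
  | zero => exact h0
  | succ n ih =>
    rw [add_sub_cancel_right, det2_succ_of_recurrence ht]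
    exact mul_ne_zero (hκ n) ih
  | pred n ih =>
    have h := det2_succ_of_recurrence ht (-n - 1)
    rw [sub_add_cancel] at h
    rw [h] at ih
    exact right_ne_zero_of_mul ih

end Recurrence

theorem stmt_2_general (κ κbar : ℤ → ℝ) (hκ : ∀ k, κ k ≠ 0) :
    ∃ r : ℤ → Fin 2 → ℝ, Nondeg2 r ∧
      ∀ k : ℤ, kappa2 r k = κ k ∧ kbar2 r k = κbar k := by
  obtain ⟨t, h0, ht⟩ := exists_recurrence hκ κbar
  obtain ⟨r, hr⟩ := exists_tang2_eq t
  have hD := det2_ne_zero_of_recurrence hκ ht h0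
  refine ⟨r, fun k ↦ hr ▸ hD k, fun k ↦ ⟨?_, ?_⟩⟩
  · rw [kappa2, hr, det2_succ_of_recurrence ht, mul_div_cancel_right₀ _ (hD k)]
  · rw [kbar2, hr, det2_pred_succ_of_recurrence ht, mul_div_cancel_right₀ _ (hD k)]

/-- Existence of a discrete planar curve with prescribed nonzero centroaffine curvatures. -/
theorem stmt_2 (κ κbar : ℤ → ℝ) (hκ : ∀ k, κ k ≠ 0) (hκbar : ∀ k, κbar k ≠ 0) :
    ∃ r : ℤ → Fin 2 → ℝ, Nondeg2 r ∧
      ∀ k : ℤ, kappa2 r k = κ k ∧ kbar2 r k = κbar k :=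
  stmt_2_general κ κbar hκ
end

section
/- Let r, r̄ : ℤ → ℝ² be two nondegenerate discrete planar curves that have the same first and second centroaffine curvatures at every k ∈ ℤ. Then there exist an invertible 2×2 real matrix A and a constant vector C ∈ ℝ² such that r(k) = A·r̄(k) + C for all k ∈ ℤ; that is, the two curves are affinely equivalent. -/
/-! Both tangent sequences satisfy the recurrence `t (k+1) = κ̄ k • t k - κ k • t (k-1)` with the
same coefficients and `κ k ≠ 0`, so a solution is determined, forwards and backwards, by two
consecutive terms. Hence the matrix sending `t̄ (-1), t̄ 0` to `t (-1), t 0` sends every `t̄ k` to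
`t k`, and then `r - A r̄` is constant. -/

open Matrix

theorem eq_zero_of_two_term_recurrence {K V : Type*} [Field K] [AddCommGroup V] [Module K V]
    {a b : ℤ → K} {h : ℤ → V} (hb : ∀ k, b k ≠ 0)
    (hrec : ∀ k, h (k + 1) = a k • h k - b k • h (k - 1)) (h_neg_one : h (-1) = 0)
    (h_zero : h 0 = 0) (k : ℤ) : h k = 0 := by
  suffices ∀ k : ℤ, h (k - 1) = 0 ∧ h k = 0 from (this k).2
  intro k
  induction k using Int.induction_on with
  | zero => exact ⟨by simpa using h_neg_one, h_zero⟩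
  | succ n ih => exact ⟨by simpa using ih.2, by rw [hrec, ih.1, ih.2]; simp⟩
  | pred n ih =>
    have hstep := hrec (-n - 1)
    rw [sub_add_cancel, ih.1, ih.2, smul_zero, zero_sub, eq_comm, neg_eq_zero,
      smul_eq_zero_iff_right (hb _)] at hstep
    exact ⟨hstep, ih.1⟩

lemma det2_smul_eq_sub (a b c : Fin 2 → ℝ) : det2 a b • c = det2 a c • b - det2 b c • a := by
  ext i
  fin_cases i <;>
    simp only [det2, Fin.zero_eta, Fin.mk_one, Pi.smul_apply, smul_eq_mul, Pi.sub_apply] <;> ring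

lemma tang2_add_one {s : ℤ → Fin 2 → ℝ} (hs : Nondeg2 s) (k : ℤ) :
    tang2 s (k + 1) = kbar2 s k • tang2 s k - kappa2 s k • tang2 s (k - 1) := by
  rw [kbar2, kappa2, div_eq_inv_mul, div_eq_inv_mul, mul_smul, mul_smul, ← smul_sub,
    ← det2_smul_eq_sub, inv_smul_smul₀ (hs k)]

lemma kappa2_ne_zero {s : ℤ → Fin 2 → ℝ} (hs : Nondeg2 s) (k : ℤ) : kappa2 s k ≠ 0 :=
  div_ne_zero (by simpa using hs (k + 1)) (hs k)

lemma det_transpose_of_eq_det2 (u v : Fin 2 → ℝ) : (of ![u, v])ᵀ.det = det2 u v := by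
  simp [det_fin_two, det2]

lemma exists_det_ne_zero_mulVec_eq {u v p q : Fin 2 → ℝ} (huv : det2 u v ≠ 0)
    (hpq : det2 p q ≠ 0) : ∃ A : Matrix (Fin 2) (Fin 2) ℝ, A.det ≠ 0 ∧ A *ᵥ u = p ∧ A *ᵥ v = q := by
  set U := (of ![u, v])ᵀ
  set P := (of ![p, q])ᵀ
  have hU : IsUnit U.det := (det_transpose_of_eq_det2 u v ▸ huv).isUnit
  have hmap : ∀ i, (P * U⁻¹) *ᵥ (U *ᵥ Pi.single i 1) = P *ᵥ Pi.single i 1 := fun i => by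
    rw [mulVec_mulVec, Matrix.mul_assoc, nonsing_inv_mul U hU, Matrix.mul_one]
  refine ⟨P * U⁻¹, ?_, ?_, ?_⟩
  · rw [det_mul]
    exact mul_ne_zero (by rwa [det_transpose_of_eq_det2]) (isUnit_nonsing_inv_det U hU).ne_zero
  · simpa [U, P, mulVec_single] using hmap 0
  · simpa [U, P, mulVec_single] using hmap 1

lemma eq_mulVec_add_of_tang2_eq {r rb : ℤ → Fin 2 → ℝ} {A : Matrix (Fin 2) (Fin 2) ℝ}
    (h : ∀ k, A *ᵥ tang2 rb k = tang2 r k) (k : ℤ) : r k = A *ᵥ rb k + (r 0 - A *ᵥ rb 0) := by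
  have hper : Function.Periodic (fun k => r k - A *ᵥ rb k) 1 := fun k => by
    have := h k
    rw [tang2, tang2, mulVec_sub] at this
    show r (k + 1) - A *ᵥ rb (k + 1) = r k - A *ᵥ rb k
    rw [sub_eq_sub_iff_sub_eq_sub, ← this]
  have := hper.int_mul_eq k
  simp only [Int.cast_id, mul_one] at this
  rw [← this]
  abel

/-- Two discrete planar curves with the same centroaffine curvatures are affinely
equivalent. -/
theorem stmt_3 (r rb : ℤ → Fin 2 → ℝ) (hr : Nondeg2 r) (hrb : Nondeg2 rb)
    (hκ : ∀ k : ℤ, kappa2 r k = kappa2 rb k) (hκbar : ∀ k : ℤ, kbar2 r k = kbar2 rb k) :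
    ∃ (A : Matrix (Fin 2) (Fin 2) ℝ) (C : Fin 2 → ℝ), A.det ≠ 0 ∧
      ∀ k : ℤ, r k = A.mulVec (rb k) + C := by
  obtain ⟨A, hA, hA_neg_one, hA_zero⟩ :=
    exists_det_ne_zero_mulVec_eq (by simpa using hrb 0) (by simpa using hr 0)
  have htang : ∀ k, A *ᵥ tang2 rb k = tang2 r k := by
    intro k
    rw [← sub_eq_zero]
    refine eq_zero_of_two_term_recurrence (h := fun k => A *ᵥ tang2 rb k - tang2 r k)
      (a := kbar2 rb) (kappa2_ne_zero hrb) (fun k => ?_) (sub_eq_zero.2 hA_neg_one)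
      (sub_eq_zero.2 hA_zero) k
    rw [tang2_add_one hrb, tang2_add_one hr, hκ, hκbar, mulVec_sub, mulVec_smul, mulVec_smul]
    module
  exact ⟨A, r 0 - A *ᵥ rb 0, hA, eq_mulVec_add_of_tang2_eq htang⟩
end

section
/- Let r : ℤ → ℝ² be a nondegenerate discrete planar curve with constant centroaffine curvatures, κ_k = κ ≠ 0 and κ̄_k = κ̄ for all k ∈ ℤ, and let p ≥ 3 be an integer. Then r is closed with minimal period p (i.e. p is the smallest positive integer with r(k+p) = r(k) for all k) if and only if κ = 1, |κ̄| ≤ 2, and there exist θ ∈ ℝ and an integer l coprime to p such that cos θ = κ̄/2 and p·θ = 2lπ. -/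
/-!
Constant curvatures mean that the edges satisfy `t (k + 2) = κbar • t (k + 1) - κ • t k`, so
`t n = c n • t 0 + s n • t 1` for the fundamental solutions `c`, `s` of the scalar recurrence, and
the edges are `q`-periodic exactly when the `q`-step transfer matrix is the identity. Its
determinant `κ ^ q` forces `κ = ±1`, and every real root `x` of `x ^ 2 - κbar * x + κ` satisfies
`x ^ q = 1`. This rules out `|κbar| ≥ 2` when `κ = 1`, and forces `κbar = 0` when `κ = -1`; then the
edges alternate and the curve drifts by `t 0 + t 1` every two steps, so it never closes.

For `κ = 1` and `κbar = 2 cos θ` with `sin θ ≠ 0` one has `s n * sin θ = sin (n θ)`, so the transfer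
matrix is trivial iff `cos (q θ) = 1`; summing the recurrence over a period gives
`(2 - κbar) • (r q - r 0) = 0`, so edge-periodicity already closes the curve. The least `q > 0` with
`q θ ∈ 2πℤ` is `p` exactly when `p θ = 2 l π` with `l` coprime to `p`.
-/

open Function Finset Real

lemma det2_smul_eq (u v w : Fin 2 → ℝ) :
    det2 u v • w = det2 u w • v - det2 v w • u := by
  ext i
  fin_cases i <;> simp [det2] <;> ring

lemma eq_and_eq_of_smul_add_smul_eq {u v : Fin 2 → ℝ} (h : det2 u v ≠ 0) {x y x' y' : ℝ}
    (hxy : x • u + y • v = x' • u + y' • v) : x = x' ∧ y = y' := by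
  have h0 := congrFun hxy 0
  have h1 := congrFun hxy 1
  simp only [Pi.add_apply, Pi.smul_apply, smul_eq_mul] at h0 h1
  constructor
  · apply mul_right_cancel₀ h
    simp only [det2]
    linear_combination v 1 * h0 - v 0 * h1
  · apply mul_right_cancel₀ h
    simp only [det2]
    linear_combination u 0 * h1 - u 1 * h0

lemma tang2_recurrence {r : ℤ → Fin 2 → ℝ} (hr : Nondeg2 r) {κ κbar : ℝ}
    (hconst : ∀ k, kappa2 r k = κ ∧ kbar2 r k = κbar) (k : ℤ) :
    tang2 r (k + 2) = κbar • tang2 r (k + 1) - κ • tang2 r k := by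
  have hD : det2 (tang2 r k) (tang2 r (k + 1)) ≠ 0 := by simpa using hr (k + 1)
  obtain ⟨hκ, hκbar⟩ := hconst (k + 1)
  simp only [kappa2, kbar2, add_sub_cancel_right, add_assoc, one_add_one_eq_two] at hκ hκbar
  rw [div_eq_iff hD] at hκ hκbar
  apply smul_right_injective _ hD
  dsimp only
  rw [det2_smul_eq, hκbar, hκ, smul_sub, smul_smul, smul_smul, mul_comm κbar, mul_comm κ]

section FundamentalSolutions

variable {R : Type*} [CommRing R]

def fundC (a b : R) : ℕ → R
  | 0 => 1
  | 1 => 0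
  | n + 2 => a * fundC a b (n + 1) - b * fundC a b n

def fundS (a b : R) : ℕ → R
  | 0 => 0
  | 1 => 1
  | n + 2 => a * fundS a b (n + 1) - b * fundS a b n

lemma eq_fundC_smul_add_fundS_smul {M : Type*} [AddCommGroup M] [Module R M] {a b : R}
    {u : ℕ → M} (hu : ∀ n, u (n + 2) = a • u (n + 1) - b • u n) (n : ℕ) :
    u n = fundC a b n • u 0 + fundS a b n • u 1 := by
  induction n using Nat.twoStepInduction with
  | zero => simp [fundC, fundS]
  | one => simp [fundC, fundS]
  | more n h0 h1 =>
    rw [hu, h0, h1]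
    simp only [fundC, fundS]
    module

lemma fundC_mul_fundS_succ_sub (a b : R) (n : ℕ) :
    fundC a b n * fundS a b (n + 1) - fundC a b (n + 1) * fundS a b n = b ^ n := by
  induction n with
  | zero => simp [fundC, fundS]
  | succ n ih =>
    rw [pow_succ, ← ih]
    simp only [fundC, fundS]
    ring

/-- The transfer matrix `(u 0, u 1) ↦ (u q, u (q + 1))` of the recurrence is the identity. -/
def HasTrivialMonodromy (a b : R) (q : ℕ) : Prop :=
  fundC a b q = 1 ∧ fundS a b q = 0 ∧ fundC a b (q + 1) = 0 ∧ fundS a b (q + 1) = 1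

namespace HasTrivialMonodromy

lemma apply_eq {a b : R} {q : ℕ} (h : HasTrivialMonodromy a b q) {M : Type*} [AddCommGroup M]
    [Module R M] {u : ℕ → M} (hu : ∀ n, u (n + 2) = a • u (n + 1) - b • u n) :
    u q = u 0 ∧ u (q + 1) = u 1 := by
  obtain ⟨h₁, h₂, h₃, h₄⟩ := h
  rw [eq_fundC_smul_add_fundS_smul hu q, eq_fundC_smul_add_fundS_smul hu (q + 1), h₁, h₂, h₃, h₄]
  simp

lemma pow_eq_one {a b : R} {q : ℕ} (h : HasTrivialMonodromy a b q) : b ^ q = 1 := by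
  obtain ⟨h₁, h₂, h₃, h₄⟩ := h
  simpa [h₁, h₂, h₃, h₄] using (fundC_mul_fundS_succ_sub a b q).symm

lemma pow_eq_one_of_root {a b : R} {q : ℕ} (h : HasTrivialMonodromy a b q) {x : R}
    (hx : x ^ 2 = a * x - b) : x ^ q = 1 := by
  simpa using (h.apply_eq (u := (x ^ ·)) fun n => by
    simp only [smul_eq_mul]
    linear_combination x ^ n * hx).1

lemma sq_ne_four_mul {K : Type*} [Field K] [CharZero K] {a b : K} {q : ℕ}
    (h : HasTrivialMonodromy a b q) (hq : q ≠ 0) : a ^ 2 ≠ 4 * b := by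
  intro hab
  set x := a / 2
  have hx : x ^ 2 = a * x - b := by linear_combination (-1 / 4 : K) * hab
  have hxq := h.pow_eq_one_of_root hx
  -- with a double root `x`, the sequence `n * x ^ n` also solves the recurrence
  have := (h.apply_eq (u := fun n : ℕ => (n : K) * x ^ n) fun n => by
    simp only [smul_eq_mul]
    push_cast
    linear_combination (n * x ^ n : K) * hx).1
  simp [hxq, hq] at this

end HasTrivialMonodromy

end FundamentalSolutions

lemma exists_sq_eq_mul_sub {a b : ℝ} (h : 4 * b ≤ a ^ 2) : ∃ x : ℝ, x ^ 2 = a * x - b :=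
  ⟨(a + √(a ^ 2 - 4 * b)) / 2, by linear_combination (1 / 4 : ℝ) * sq_sqrt (sub_nonneg.2 h)⟩

namespace HasTrivialMonodromy

variable {a : ℝ} {q : ℕ}

lemma eq_one_or_eq_neg_one_of_root {b : ℝ} (h : HasTrivialMonodromy a b q) (hq : q ≠ 0) {x : ℝ}
    (hx : x ^ 2 = a * x - b) : x = 1 ∨ x = -1 := by
  rcases pow_eq_one_iff_cases.1 (h.pow_eq_one_of_root hx) with h | h | h
  exacts [absurd h hq, .inl h, .inr h.1]

lemma sq_lt_four (h : HasTrivialMonodromy a 1 q) (hq : q ≠ 0) : a ^ 2 < 4 := by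
  by_contra! ha
  obtain ⟨x, hx⟩ := exists_sq_eq_mul_sub (by linarith : 4 * 1 ≤ a ^ 2)
  apply h.sq_ne_four_mul hq
  rcases h.eq_one_or_eq_neg_one_of_root hq hx with rfl | rfl <;> nlinarith

lemma eq_zero_of_neg_one (h : HasTrivialMonodromy a (-1) q) (hq : q ≠ 0) : a = 0 := by
  obtain ⟨x, hx⟩ := exists_sq_eq_mul_sub (by nlinarith [sq_nonneg a] : 4 * (-1) ≤ a ^ 2)
  rcases h.eq_one_or_eq_neg_one_of_root hq hx with rfl | rfl <;> linarith

end HasTrivialMonodromy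

section IntRecurrence

variable {K M : Type*} [Field K] [AddCommGroup M] [Module K M] {a b : K}

lemma eq_zero_of_recurrence (hb : b ≠ 0) {u : ℤ → M}
    (hu : ∀ k, u (k + 2) = a • u (k + 1) - b • u k) (h₀ : u 0 = 0) (h₁ : u 1 = 0) (k : ℤ) :
    u k = 0 := by
  suffices ∀ k, u k = 0 ∧ u (k + 1) = 0 from (this k).1
  intro k
  induction k using Int.inductionOn' (b := 0) with
  | zero => exact ⟨h₀, by simpa using h₁⟩
  | succ k _ ih =>
    refine ⟨ih.2, ?_⟩
    rw [add_assoc, one_add_one_eq_two, hu, ih.1, ih.2, smul_zero, smul_zero, sub_zero]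
  | pred k _ ih =>
    refine ⟨?_, by rw [sub_add_cancel]; exact ih.1⟩
    have := hu (k - 1)
    rw [show k - 1 + 2 = k + 1 by ring, sub_add_cancel, ih.1, ih.2, smul_zero, zero_sub,
      eq_comm, neg_eq_zero] at this
    exact (smul_eq_zero.1 this).resolve_left hb

lemma HasTrivialMonodromy.periodic {q : ℕ} (h : HasTrivialMonodromy a b q) (hb : b ≠ 0)
    {u : ℤ → M} (hu : ∀ k, u (k + 2) = a • u (k + 1) - b • u k) : Periodic u q := by
  obtain ⟨h₀, h₁⟩ := h.apply_eq (u := fun n : ℕ => u n) fun n => by push_cast; exact hu n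
  push_cast at h₀ h₁
  have hg (k : ℤ) : u (k + 2 + q) - u (k + 2) =
      a • (u (k + 1 + q) - u (k + 1)) - b • (u (k + q) - u k) := by
    rw [add_right_comm, hu, hu, add_right_comm k 1]
    module
  exact fun k => sub_eq_zero.1 (eq_zero_of_recurrence (u := fun k => u (k + q) - u k) hb hg
    (by simp [h₀]) (by simp [add_comm (1 : ℤ), h₁]) k)

end IntRecurrence

lemma HasTrivialMonodromy.of_periodic {a b : ℝ} {t : ℤ → Fin 2 → ℝ}
    (ht : ∀ k, t (k + 2) = a • t (k + 1) - b • t k) (hD : det2 (t 0) (t 1) ≠ 0) {q : ℕ}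
    (hq : Periodic t q) : HasTrivialMonodromy a b q := by
  have hN := eq_fundC_smul_add_fundS_smul (u := fun n : ℕ => t n) fun n => by
    push_cast; exact ht n
  simp only [Nat.cast_zero, Nat.cast_one] at hN
  obtain ⟨h₁, h₂⟩ := eq_and_eq_of_smul_add_smul_eq hD (x' := 1) (y' := 0) <| by
    rw [← hN q, one_smul, zero_smul, add_zero]
    simpa using hq 0
  obtain ⟨h₃, h₄⟩ := eq_and_eq_of_smul_add_smul_eq hD (x' := 0) (y' := 1) <| by
    rw [← hN (q + 1), one_smul, zero_smul, zero_add, Nat.cast_succ, add_comm]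
    exact hq 1
  exact ⟨h₁, h₂, h₃, h₄⟩

section Curve

variable {r : ℤ → Fin 2 → ℝ}

lemma sum_range_tang2 (r : ℤ → Fin 2 → ℝ) (m : ℤ) (q : ℕ) :
    ∑ k ∈ range q, tang2 r (m + k) = r (m + q) - r m := by
  simpa [tang2, add_assoc] using sum_range_sub (fun k : ℕ => r (m + k)) q

lemma periodic_tang2 {q : ℤ} (h : Periodic r q) : Periodic (tang2 r) q := fun k => by
  simp only [tang2, add_right_comm k q 1, h (k + 1), h k]

lemma periodic_of_periodic_tang2 {a b : ℝ}
    (hrec : ∀ k, tang2 r (k + 2) = a • tang2 r (k + 1) - b • tang2 r k) (hab : 1 - a + b ≠ 0)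
    {q : ℕ} (hq : Periodic (tang2 r) q) : Periodic r q := by
  have hconst (k : ℤ) : r (k + q) - r k = r q - r 0 := by
    have h₁ : Periodic (fun k => r (k + q) - r k) 1 := fun k => by
      have := hq k
      simp only [tang2] at this
      show r (k + 1 + q) - r (k + 1) = r (k + q) - r k
      rw [add_right_comm]
      linear_combination (norm := module) this
    simpa using h₁.int_mul_eq k
  -- sum the recurrence over one period: every shifted sum of edges equals `r q - r 0`
  have hsum (m : ℤ) : ∑ k ∈ range q, tang2 r (m + k) = r q - r 0 := by
    rw [sum_range_tang2, hconst]
  have key : ∑ k ∈ range q, tang2 r (2 + k) =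
      ∑ k ∈ range q, (a • tang2 r (1 + k) - b • tang2 r (0 + k)) :=
    sum_congr rfl fun k _ => by rw [add_comm (2 : ℤ), add_comm (1 : ℤ), zero_add, hrec]
  rw [sum_sub_distrib, ← smul_sum, ← smul_sum, hsum, hsum, hsum] at key
  have hzero : (1 - a + b) • (r q - r 0) = 0 := by
    linear_combination (norm := module) key
  intro k
  rw [← sub_eq_zero, hconst]
  exact (smul_eq_zero.1 hzero).resolve_left hab

lemma not_periodic_of_periodic_tang2_two (hD : det2 (tang2 r 0) (tang2 r 1) ≠ 0)
    (ht : Periodic (tang2 r) 2) {q : ℕ} (hq : q ≠ 0) : ¬Periodic r q := by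
  intro hper
  have hstep (n : ℕ) : r (n * 2) = r 0 + n • (tang2 r 0 + tang2 r 1) := by
    induction n with
    | zero => simp
    | succ n ih =>
      have h₀ := ht.nat_mul_eq n
      have h₁ := (ht.nat_mul n) 1
      rw [add_comm] at h₁
      rw [succ_nsmul, ← add_assoc, ← ih, ← h₀, ← h₁,
        show ((n + 1 : ℕ) : ℤ) * 2 = n * 2 + 1 + 1 by push_cast; ring]
      simp only [tang2]
      abel
  have hv : q • (tang2 r 0 + tang2 r 1) = 0 := by
    have h₂ : r (q * 2) = r 0 := by simpa [mul_comm] using hper.nat_mul_eq 2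
    rwa [hstep q, add_eq_left] at h₂
  have ht₁ : tang2 r 1 = -tang2 r 0 :=
    eq_neg_of_add_eq_zero_right ((smul_eq_zero.1 hv).resolve_left hq)
  apply hD
  rw [ht₁]
  simp only [det2, Pi.neg_apply]
  ring

lemma eq_one_of_periodic (hD : det2 (tang2 r 0) (tang2 r 1) ≠ 0) {a b : ℝ}
    (hrec : ∀ k, tang2 r (k + 2) = a • tang2 r (k + 1) - b • tang2 r k) {q : ℕ} (hq : q ≠ 0)
    (hper : Periodic r q) : b = 1 := by
  have hmon := HasTrivialMonodromy.of_periodic hrec hD (periodic_tang2 hper)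
  rcases pow_eq_one_iff_cases.1 hmon.pow_eq_one with h | h | ⟨rfl, -⟩
  · exact absurd h hq
  · exact h
  · obtain rfl := hmon.eq_zero_of_neg_one hq
    exact absurd hper (not_periodic_of_periodic_tang2_two hD (fun k => by simpa using hrec k) hq)

end Curve

section Elliptic

lemma cos_nat_mul_add (θ φ : ℝ) (n : ℕ) :
    cos (n * θ + φ) =
      fundC (2 * cos θ) 1 n * cos φ + fundS (2 * cos θ) 1 n * cos (θ + φ) := by
  refine (eq_fundC_smul_add_fundS_smul (a := 2 * cos θ) (b := 1)
    (u := fun n : ℕ => cos (n * θ + φ)) (fun n => ?_) n).trans (by simp)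
  have h₁ : ((n + 2 : ℕ) : ℝ) * θ + φ = ((n + 1 : ℕ) : ℝ) * θ + φ + θ := by push_cast; ring
  have h₂ : (n : ℝ) * θ + φ = ((n + 1 : ℕ) : ℝ) * θ + φ - θ := by push_cast; ring
  simp only [smul_eq_mul, one_mul]
  rw [h₁, h₂, cos_add, cos_sub]
  ring

lemma cos_nat_mul (θ : ℝ) (n : ℕ) :
    cos (n * θ) = fundC (2 * cos θ) 1 n + fundS (2 * cos θ) 1 n * cos θ := by
  simpa using cos_nat_mul_add θ 0 n

lemma sin_nat_mul (θ : ℝ) (n : ℕ) : sin (n * θ) = fundS (2 * cos θ) 1 n * sin θ := by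
  simpa [← sub_eq_add_neg, cos_sub_pi_div_two] using cos_nat_mul_add θ (-(π / 2)) n

lemma HasTrivialMonodromy.two_mul_cos_iff {θ : ℝ} (hθ : sin θ ≠ 0) {q : ℕ} :
    HasTrivialMonodromy (2 * cos θ) 1 q ↔ cos (q * θ) = 1 := by
  constructor
  · rintro ⟨h₁, h₂, -, -⟩
    simp [cos_nat_mul, h₁, h₂]
  · intro hc
    have hs : sin (q * θ) = 0 := by
      simpa [hc] using sin_sq_add_cos_sq (q * θ)
    have h₂ : fundS (2 * cos θ) 1 q = 0 := by
      simpa [hθ] using (sin_nat_mul θ q).symm.trans hs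
    have hc' := cos_nat_mul θ (q + 1)
    have hs' := sin_nat_mul θ (q + 1)
    simp only [Nat.cast_succ, add_one_mul, cos_add, sin_add, hc, hs] at hc' hs'
    have h₄ : fundS (2 * cos θ) 1 (q + 1) = 1 :=
      mul_right_cancel₀ hθ (by linear_combination -hs')
    refine ⟨?_, h₂, by linear_combination -hc' - cos θ * h₄, h₄⟩
    simpa [h₂] using (cos_nat_mul θ q).symm.trans hc

lemma periodic_iff_cos_eq_one {r : ℤ → Fin 2 → ℝ} (hD : det2 (tang2 r 0) (tang2 r 1) ≠ 0)
    {θ : ℝ} (hθ : sin θ ≠ 0)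
    (hrec : ∀ k, tang2 r (k + 2) = (2 * cos θ) • tang2 r (k + 1) - (1 : ℝ) • tang2 r k)
    (q : ℕ) : Periodic r q ↔ cos (q * θ) = 1 := by
  rw [← HasTrivialMonodromy.two_mul_cos_iff hθ]
  refine ⟨fun h => .of_periodic hrec hD (periodic_tang2 h),
    fun h => periodic_of_periodic_tang2 hrec ?_ (h.periodic one_ne_zero hrec)⟩
  intro h
  apply hθ
  simpa [show cos θ = 1 by linarith] using sin_sq_add_cos_sq θ

lemma exists_two_mul_cos_eq {a : ℝ} (ha : a ^ 2 < 4) : ∃ θ, 2 * cos θ = a ∧ sin θ ≠ 0 := by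
  have h : |a / 2| < 1 := by
    rw [abs_lt]
    constructor <;> nlinarith
  refine ⟨arccos (a / 2), ?_, ?_⟩
  · rw [cos_arccos (by linarith [neg_abs_le (a / 2)]) (by linarith [le_abs_self (a / 2)])]
    ring
  · rw [sin_arccos]
    exact (sqrt_pos.2 (by nlinarith [sq_abs (a / 2), abs_nonneg (a / 2)])).ne'

end Elliptic

section Rotation

variable {θ : ℝ} {p : ℕ}

lemma cos_nat_mul_eq_one_iff_dvd {l : ℤ} (hl : Int.gcd l p = 1) (hθ : p * θ = 2 * l * π)
    (q : ℕ) : cos (q * θ) = 1 ↔ p ∣ q := by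
  rw [cos_eq_one_iff]
  constructor
  · rintro ⟨n, hn⟩
    have hqn : (q * l : ℤ) = p * n := by
      have : (q * l : ℝ) = p * n := by
        apply mul_right_cancel₀ two_pi_pos.ne'
        linear_combination (-(q : ℝ)) * hθ - (p : ℝ) * hn
      exact_mod_cast this
    have hco : IsCoprime (p : ℤ) l := Int.isCoprime_iff_gcd_eq_one.2 (by rwa [Int.gcd_comm])
    exact Int.natCast_dvd_natCast.1 (hco.dvd_of_dvd_mul_right ⟨n, hqn⟩)
  · rintro ⟨m, rfl⟩
    exact ⟨m * l, by push_cast; linear_combination (-(m : ℝ)) * hθ⟩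

lemma sin_ne_zero_of_gcd_eq_one (hp : 3 ≤ p) {l : ℤ} (hl : Int.gcd l p = 1)
    (hθ : p * θ = 2 * l * π) : sin θ ≠ 0 := by
  intro hs
  have hcos : cos ((2 : ℕ) * θ) = 1 := by
    rw [Nat.cast_ofNat, cos_two_mul]
    nlinarith [sin_sq_add_cos_sq θ]
  have := Nat.le_of_dvd two_pos ((cos_nat_mul_eq_one_iff_dvd hl hθ 2).1 hcos)
  omega

lemma exists_gcd_eq_one_of_minimal (hp : 0 < p) (hcos : cos (p * θ) = 1)
    (hmin : ∀ q : ℕ, 0 < q → cos (q * θ) = 1 → p ≤ q) :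
    ∃ l : ℤ, Int.gcd l p = 1 ∧ p * θ = 2 * l * π := by
  obtain ⟨n, hn⟩ := (cos_eq_one_iff _).1 hcos
  refine ⟨n, ?_, by linear_combination -hn⟩
  set g := Int.gcd n p
  have hg : 0 < g := Int.gcd_pos_of_ne_zero_right _ (by exact_mod_cast hp.ne')
  obtain ⟨q, hq⟩ : g ∣ p := Int.natCast_dvd_natCast.1 (Int.gcd_dvd_right _ _)
  obtain ⟨m, hm⟩ := Int.gcd_dvd_left n p
  have hq₀ : 0 < q := Nat.pos_of_ne_zero (by rintro rfl; omega)
  have hqθ : cos (q * θ) = 1 := (cos_eq_one_iff _).2 ⟨m, by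
    apply mul_left_cancel₀ (Nat.cast_ne_zero.2 hg.ne' : (g : ℝ) ≠ 0)
    rw [hq, hm] at hn
    push_cast at hn
    linear_combination hn⟩
  have hgq : g * q ≤ 1 * q := by rw [← hq, one_mul]; exact hmin q hq₀ hqθ
  have := Nat.le_of_mul_le_mul_right hgq hq₀
  omega

end Rotation

open Real in
theorem stmt_5_general (r : ℤ → Fin 2 → ℝ) (hr : Nondeg2 r) (κ κbar : ℝ)
    (hconst : ∀ k : ℤ, kappa2 r k = κ ∧ kbar2 r k = κbar)
    (p : ℕ) (hp : 3 ≤ p) :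
    ((∀ k : ℤ, r (k + p) = r k) ∧
        ∀ q : ℕ, 0 < q → (∀ k : ℤ, r (k + q) = r k) → p ≤ q) ↔
      κ = 1 ∧ |κbar| ≤ 2 ∧
        ∃ (θ : ℝ) (l : ℤ), Int.gcd l p = 1 ∧ Real.cos θ = κbar / 2 ∧
          (p : ℝ) * θ = 2 * (l : ℝ) * π := by
  have hrec := tang2_recurrence hr hconst
  have hD : det2 (tang2 r 0) (tang2 r 1) ≠ 0 := by simpa using hr 1
  constructor
  · rintro ⟨hper, hmin⟩
    obtain rfl := eq_one_of_periodic hD hrec (by omega) hper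
    have hmon := HasTrivialMonodromy.of_periodic hrec hD (periodic_tang2 hper)
    obtain ⟨θ, rfl, hθ⟩ := exists_two_mul_cos_eq (hmon.sq_lt_four (by omega))
    have hiff := periodic_iff_cos_eq_one hD hθ hrec
    obtain ⟨l, hl, hpθ⟩ := exists_gcd_eq_one_of_minimal (by omega) ((hiff p).1 hper)
      fun q hq h => hmin q hq ((hiff q).2 h)
    refine ⟨rfl, ?_, θ, l, hl, by ring, hpθ⟩
    rw [abs_mul, abs_two]
    linarith [abs_cos_le_one θ]
  · rintro ⟨rfl, -, θ, l, hl, hcos, hpθ⟩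
    obtain rfl : κbar = 2 * cos θ := by linarith
    have hiff := periodic_iff_cos_eq_one hD (sin_ne_zero_of_gcd_eq_one hp hl hpθ) hrec
    have hdvd := cos_nat_mul_eq_one_iff_dvd hl hpθ
    exact ⟨(hiff p).2 ((hdvd p).2 dvd_rfl),
      fun q hq h => Nat.le_of_dvd hq ((hdvd q).1 ((hiff q).1 h))⟩

open Real in
/-- Closedness criterion for a discrete planar curve with constant centroaffine
curvatures. -/
theorem stmt_5 (r : ℤ → Fin 2 → ℝ) (hr : Nondeg2 r) (κ κbar : ℝ) (hκ : κ ≠ 0)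
    (hconst : ∀ k : ℤ, kappa2 r k = κ ∧ kbar2 r k = κbar)
    (p : ℕ) (hp : 3 ≤ p) :
    ((∀ k : ℤ, r (k + p) = r k) ∧
        ∀ q : ℕ, 0 < q → (∀ k : ℤ, r (k + q) = r k) → p ≤ q) ↔
      κ = 1 ∧ |κbar| ≤ 2 ∧
        ∃ (θ : ℝ) (l : ℤ), Int.gcd l p = 1 ∧ Real.cos θ = κbar / 2 ∧
          (p : ℝ) * θ = 2 * (l : ℝ) * π :=
  stmt_5_general r hr κ κbar hconst p hp
end

section
/- For every real number κ̄ and every positive integer p, the p-th power of the 3×3 real matrix with rows (1+κ̄, 1, 0), (1−κ̄, 0, 1), (−1, 0, 0) is never the identity matrix. (This is the transition matrix of a discrete planar curve with constant curvatures κ = −1 and κ̄; consequently no such curve is closed.) -/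
open Matrix

private lemma stmt_6_step (r κbar : ℝ) (hr2 : r ^ 2 = κbar * r + 1) :
    ![r ^ 2, r, 1] ᵥ* (!![1 + κbar, 1, 0; 1 - κbar, 0, 1; -1, 0, 0] : Matrix (Fin 3) (Fin 3) ℝ)
      = r • ![r ^ 2, r, 1] := by
  funext i
  fin_cases i <;>
    simp [Matrix.vecMul, dotProduct, Fin.sum_univ_three, Matrix.vecHead,
      Matrix.vecTail]
  · linear_combination (1 - r) * hr2
  · ring

private lemma stmt_6_pow (r κbar : ℝ) (hr2 : r ^ 2 = κbar * r + 1) (n : ℕ) :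
    ![r ^ 2, r, 1] ᵥ* (!![1 + κbar, 1, 0; 1 - κbar, 0, 1; -1, 0, 0] : Matrix (Fin 3) (Fin 3) ℝ) ^ n
      = r ^ n • ![r ^ 2, r, 1] := by
  induction n with
  | zero => simp
  | succ n ih =>
      rw [pow_succ _ n, ← Matrix.vecMul_vecMul, ih, Matrix.smul_vecMul,
        stmt_6_step r κbar hr2, smul_smul, ← pow_succ]

private lemma stmt_6_zero (n : ℕ) :
    ![2, 1, 0] ᵥ* (!![1 + (0:ℝ), 1, 0; 1 - 0, 0, 1; -1, 0, 0] : Matrix (Fin 3) (Fin 3) ℝ) ^ n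
      = ![2 + (n : ℝ), 1 + (n : ℝ), (n : ℝ)] := by
  induction n with
  | zero =>
      simp only [pow_zero, Matrix.vecMul_one]
      funext i
      fin_cases i <;> norm_num
  | succ n ih =>
      rw [pow_succ _ n, ← Matrix.vecMul_vecMul, ih]
      funext i
      fin_cases i <;>
        simp [Matrix.vecMul, dotProduct, Fin.sum_univ_three, Matrix.vecHead,
          Matrix.vecTail] <;> ring

/-- No power of the transition matrix of a discrete planar curve with constant
curvatures `κ = -1` and `κ̄` is the identity matrix. -/
theorem stmt_6 (κbar : ℝ) (p : ℕ) (hp : 0 < p) :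
    (!![1 + κbar, 1, 0; 1 - κbar, 0, 1; -1, 0, 0] : Matrix (Fin 3) (Fin 3) ℝ) ^ p ≠ 1 := by
  intro hM
  set r : ℝ := (κbar + Real.sqrt (κbar ^ 2 + 4)) / 2 with hrdef
  have hsq : Real.sqrt (κbar ^ 2 + 4) ^ 2 = κbar ^ 2 + 4 :=
    Real.sq_sqrt (by positivity)
  have hr2 : r ^ 2 = κbar * r + 1 := by
    rw [hrdef]; nlinarith [hsq]
  -- the left eigenvector gives r ^ p = 1
  have hkey := stmt_6_pow r κbar hr2 p
  rw [hM, Matrix.vecMul_one] at hkey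
  have hrp : r ^ p = 1 := by
    have := congrFun hkey 2
    simpa using this.symm
  -- hence r = ±1 and κbar = 0
  have hr1 : r = 1 ∨ r = -1 := by
    rcases pow_eq_one_iff_cases.mp hrp with h | h | h
    · omega
    · exact Or.inl h
    · exact Or.inr h.1
  have hr0 : r ≠ 0 := by rcases hr1 with h | h <;> rw [h] <;> norm_num
  have hκ : κbar = 0 := by
    have hsq1 : r ^ 2 = 1 := by rcases hr1 with h | h <;> rw [h] <;> ring
    have : κbar * r = 0 := by linarith [hr2, hsq1]
    rcases mul_eq_zero.mp this with h | h
    · exact h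
    · exact absurd h hr0
  subst hκ
  -- now use the generalized left eigenvector for the eigenvalue 1
  have hkey2 := stmt_6_zero p
  rw [hM, Matrix.vecMul_one] at hkey2
  have h0 : (0 : ℝ) = (p : ℝ) := by simpa using congrFun hkey2 2
  have : p = 0 := by exact_mod_cast h0.symm
  omega
end

section
/- Let r, r̄ : ℤ → ℝ³ be two nondegenerate discrete centroaffine space curves. Then there exists an invertible 3×3 real matrix A with r(k) = A·r̄(k) for all k ∈ ℤ (i.e. the curves are centroaffinely equivalent) if and only if at every k ∈ ℤ the two curves have the same first centroaffine curvature κ_k, the same second centroaffine curvature κ̄_k, and the same centroaffine torsion τ_k. -/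
/-- Determinant of the 3×3 matrix with columns `u`, `v`, `w`. -/
noncomputable def det3 (u v w : Fin 3 → ℝ) : ℝ := (Matrix.of ![u, v, w]).det

/-- Edge tangent vector of a discrete space curve. -/
def tang3 (r : ℤ → Fin 3 → ℝ) (k : ℤ) : Fin 3 → ℝ := r (k + 1) - r k

/-- Nondegeneracy of a discrete centroaffine space curve. -/
def Nondeg3 (r : ℤ → Fin 3 → ℝ) : Prop :=
  ∀ k : ℤ, det3 (r (k - 1)) (r k) (r (k + 1)) ≠ 0

/-- First centroaffine curvature. -/
noncomputable def kappa3 (r : ℤ → Fin 3 → ℝ) (k : ℤ) : ℝ :=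
  det3 (r k) (r (k + 1)) (r (k + 2)) / det3 (r (k - 1)) (r k) (r (k + 1))

/-- Second centroaffine curvature. -/
noncomputable def kbar3 (r : ℤ → Fin 3 → ℝ) (k : ℤ) : ℝ :=
  det3 (r (k + 1)) (tang3 r (k - 1)) (tang3 r (k + 1)) /
    det3 (r k) (tang3 r (k - 1)) (tang3 r k)

/-- Centroaffine torsion. -/
noncomputable def tau3 (r : ℤ → Fin 3 → ℝ) (k : ℤ) : ℝ :=
  det3 (tang3 r (k - 1)) (tang3 r k) (tang3 r (k + 1)) /
    det3 (r (k - 1)) (r k) (r (k + 1))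

/-!
Each invariant is a ratio of two determinants, and a linear map `A` multiplies both by `det A`,
so centroaffinely equivalent curves have the same invariants.

Conversely, Cramer's rule in the basis `r (k - 1), r k, r (k + 1)` gives the recurrence
`r (k + 2) = κ r (k - 1) - (κ + κ̄) r k + (1 + τ + κ̄) r (k + 1)`, and `κ ≠ 0` lets it run backwards.
If both curves have the same invariants, take `A` sending `rb (-1), rb 0, rb 1` to
`r (-1), r 0, r 1`; then `r - A rb` solves the recurrence with zero initial data, so it vanishes.
-/

open Matrix

lemma det3_eq (u v w : Fin 3 → ℝ) :
    det3 u v w = u 0 * (v 1 * w 2 - v 2 * w 1) - u 1 * (v 0 * w 2 - v 2 * w 0)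
      + u 2 * (v 0 * w 1 - v 1 * w 0) := by
  simp only [det3, det_fin_three, of_apply, cons_val', cons_val_fin_one, cons_val_zero,
    cons_val_one, cons_val]
  ring

lemma det3_mulVec (A : Matrix (Fin 3) (Fin 3) ℝ) (u v w : Fin 3 → ℝ) :
    det3 (A *ᵥ u) (A *ᵥ v) (A *ᵥ w) = A.det * det3 u v w := by
  have hrows : Matrix.of ![A *ᵥ u, A *ᵥ v, A *ᵥ w] = Matrix.of ![u, v, w] * Aᵀ := by
    ext i j
    fin_cases i <;> simp [mul_apply, mulVec, dotProduct, mul_comm]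
  rw [det3, hrows, det_mul, det_transpose, mul_comm, det3]

lemma det3_smul_eq (a b c d : Fin 3 → ℝ) :
    det3 a b c • d = det3 d b c • a + det3 a d c • b + det3 a b d • c := by
  ext j
  fin_cases j <;>
    simp only [det3_eq, Fin.zero_eta, Fin.mk_one, Fin.reduceFinMk, Pi.add_apply, Pi.smul_apply,
      smul_eq_mul] <;>
    ring

theorem exists_mulVec_eq_of_det_ne_zero {K : Type*} [Field K] {n : ℕ} (b b' : Fin n → Fin n → K)
    (hb : (of b).det ≠ 0) (hb' : (of b').det ≠ 0) :
    ∃ A : Matrix (Fin n) (Fin n) K, A.det ≠ 0 ∧ ∀ i, A *ᵥ b i = b' i := by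
  have hu : IsUnit (of b)ᵀ.det := by rw [det_transpose]; exact hb.isUnit
  refine ⟨(of b')ᵀ * (of b)ᵀ⁻¹, ?_, fun i => ?_⟩
  · rw [det_mul, det_nonsing_inv, det_transpose, det_transpose, Ring.inverse_eq_inv]
    exact mul_ne_zero hb' (inv_ne_zero hb)
  · have hcol : ∀ c : Fin n → Fin n → K, (of c)ᵀ *ᵥ Pi.single i 1 = c i := by
      intro c; rw [mulVec_single_one]; rfl
    rw [← hcol b, mulVec_mulVec, Matrix.mul_assoc, nonsing_inv_mul _ hu, Matrix.mul_one, hcol]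

lemma tang3_sub_one (r : ℤ → Fin 3 → ℝ) (k : ℤ) : tang3 r (k - 1) = r k - r (k - 1) := by
  rw [tang3, sub_add_cancel]

lemma tang3_add_one (r : ℤ → Fin 3 → ℝ) (k : ℤ) :
    tang3 r (k + 1) = r (k + 2) - r (k + 1) := by
  rw [tang3, add_assoc, one_add_one_eq_two]

lemma kbar3_eq (r : ℤ → Fin 3 → ℝ) (k : ℤ) :
    kbar3 r k = (det3 (r (k - 1)) (r (k + 1)) (r (k + 2)) - det3 (r k) (r (k + 1)) (r (k + 2)))
      / det3 (r (k - 1)) (r k) (r (k + 1)) := by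
  rw [kbar3, tang3_sub_one, tang3_add_one, tang3]
  congr 1 <;> simp only [det3_eq, Pi.sub_apply] <;> ring

lemma tau3_eq (r : ℤ → Fin 3 → ℝ) (k : ℤ) :
    tau3 r k = (det3 (r k) (r (k + 1)) (r (k + 2)) - det3 (r (k - 1)) (r (k + 1)) (r (k + 2))
      + det3 (r (k - 1)) (r k) (r (k + 2)) - det3 (r (k - 1)) (r k) (r (k + 1)))
      / det3 (r (k - 1)) (r k) (r (k + 1)) := by
  rw [tau3, tang3_sub_one, tang3_add_one, tang3]
  congr 1
  simp only [det3_eq, Pi.sub_apply]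
  ring

theorem Nondeg3.recurrence {r : ℤ → Fin 3 → ℝ} (hr : Nondeg3 r) (k : ℤ) :
    r (k + 2) = kappa3 r k • r (k - 1) + (-kappa3 r k - kbar3 r k) • r k
      + (1 + tau3 r k + kbar3 r k) • r (k + 1) := by
  have hD := hr k
  have hκ : kappa3 r k * det3 (r (k - 1)) (r k) (r (k + 1))
      = det3 (r k) (r (k + 1)) (r (k + 2)) :=
    div_mul_cancel₀ _ hD
  have hκ' : kbar3 r k * det3 (r (k - 1)) (r k) (r (k + 1))
      = det3 (r (k - 1)) (r (k + 1)) (r (k + 2)) - det3 (r k) (r (k + 1)) (r (k + 2)) := by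
    rw [kbar3_eq, div_mul_cancel₀ _ hD]
  have hτ : tau3 r k * det3 (r (k - 1)) (r k) (r (k + 1))
      = det3 (r k) (r (k + 1)) (r (k + 2)) - det3 (r (k - 1)) (r (k + 1)) (r (k + 2))
        + det3 (r (k - 1)) (r k) (r (k + 2)) - det3 (r (k - 1)) (r k) (r (k + 1)) := by
    rw [tau3_eq, div_mul_cancel₀ _ hD]
  have hcramer := det3_smul_eq (r (k - 1)) (r k) (r (k + 1)) (r (k + 2))
  have hcyc : det3 (r (k + 2)) (r k) (r (k + 1)) = det3 (r k) (r (k + 1)) (r (k + 2)) := by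
    simp only [det3_eq]; ring
  have hswap : det3 (r (k - 1)) (r (k + 2)) (r (k + 1))
      = -det3 (r (k - 1)) (r (k + 1)) (r (k + 2)) := by
    simp only [det3_eq]; ring
  apply smul_right_injective (Fin 3 → ℝ) hD
  linear_combination (norm := module) hcramer + (hcyc - hκ) • r (k - 1)
    + (hswap + hκ + hκ') • r k - (hτ + hκ') • r (k + 1)

lemma Nondeg3.kappa3_ne_zero {r : ℤ → Fin 3 → ℝ} (hr : Nondeg3 r) (k : ℤ) : kappa3 r k ≠ 0 := by
  have h := hr (k + 1)
  rw [add_sub_cancel_right, add_assoc, one_add_one_eq_two] at h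
  exact div_ne_zero h (hr k)

theorem eq_zero_of_recurrence_s7 {K V : Type*} [DivisionRing K] [AddCommGroup V] [Module K V]
    [NoZeroSMulDivisors K V] {x : ℤ → V} {a b c : ℤ → K} (ha : ∀ k, a k ≠ 0)
    (hx : ∀ k, x (k + 2) = a k • x (k - 1) + b k • x k + c k • x (k + 1))
    (hneg : x (-1) = 0) (hzero : x 0 = 0) (hone : x 1 = 0) (n : ℤ) : x n = 0 := by
  suffices ∀ n, x (n - 1) = 0 ∧ x n = 0 ∧ x (n + 1) = 0 from (this n).2.1
  intro n
  induction n using Int.inductionOn' (b := 0) with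
  | zero => exact ⟨hneg, hzero, hone⟩
  | succ k _ ih =>
    obtain ⟨hprev, hcur, hnext⟩ := ih
    refine ⟨by simpa using hcur, hnext, ?_⟩
    rw [add_assoc, one_add_one_eq_two, hx, hprev, hcur, hnext]
    simp
  | pred k _ ih =>
    obtain ⟨hprev, hcur, hnext⟩ := ih
    refine ⟨?_, hprev, by simpa using hcur⟩
    have := hx (k - 1)
    rw [show k - 1 + 2 = k + 1 by ring, show k - 1 + 1 = k by ring, hprev, hcur, hnext] at this
    simpa [ha] using this.symm

section Invariance

variable {A : Matrix (Fin 3) (Fin 3) ℝ} (r : ℤ → Fin 3 → ℝ) (k : ℤ)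

lemma tang3_mulVec : tang3 (fun k => A *ᵥ r k) k = A *ᵥ tang3 r k :=
  (mulVec_sub A _ _).symm

lemma kappa3_mulVec (hA : A.det ≠ 0) : kappa3 (fun k => A *ᵥ r k) k = kappa3 r k := by
  simp only [kappa3, det3_mulVec, mul_div_mul_left _ _ hA]

lemma kbar3_mulVec (hA : A.det ≠ 0) : kbar3 (fun k => A *ᵥ r k) k = kbar3 r k := by
  simp only [kbar3, tang3_mulVec, det3_mulVec, mul_div_mul_left _ _ hA]

lemma tau3_mulVec (hA : A.det ≠ 0) : tau3 (fun k => A *ᵥ r k) k = tau3 r k := by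
  simp only [tau3, tang3_mulVec, det3_mulVec, mul_div_mul_left _ _ hA]

end Invariance

/-- Two nondegenerate discrete centroaffine space curves are centroaffinely equivalent
iff they have the same centroaffine curvatures and torsions at every point. -/
theorem stmt_7 (r rb : ℤ → Fin 3 → ℝ) (hr : Nondeg3 r) (hrb : Nondeg3 rb) :
    (∃ A : Matrix (Fin 3) (Fin 3) ℝ, A.det ≠ 0 ∧ ∀ k : ℤ, r k = A.mulVec (rb k)) ↔
      ∀ k : ℤ, kappa3 r k = kappa3 rb k ∧ kbar3 r k = kbar3 rb k ∧
        tau3 r k = tau3 rb k := by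
  constructor
  · rintro ⟨A, hA, hrA⟩ k
    obtain rfl : r = fun k => A *ᵥ rb k := funext hrA
    exact ⟨kappa3_mulVec rb k hA, kbar3_mulVec rb k hA, tau3_mulVec rb k hA⟩
  · intro hinv
    obtain ⟨A, hA, hAb⟩ :=
      exists_mulVec_eq_of_det_ne_zero ![rb (-1), rb 0, rb 1] ![r (-1), r 0, r 1]
      (by simpa [det3] using hrb 0) (by simpa [det3] using hr 0)
    refine ⟨A, hA, fun n => sub_eq_zero.mp ?_⟩
    refine eq_zero_of_recurrence_s7 (x := fun k => r k - A *ᵥ rb k)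
      (b := fun k => -kappa3 r k - kbar3 r k) (c := fun k => 1 + tau3 r k + kbar3 r k)
      hr.kappa3_ne_zero (fun k => ?_) (sub_eq_zero.mpr (hAb 0).symm)
      (sub_eq_zero.mpr (hAb 1).symm) (sub_eq_zero.mpr (hAb 2).symm) n
    obtain ⟨hκ, hκ', hτ⟩ := hinv k
    rw [hr.recurrence, hrb.recurrence, ← hκ, ← hκ', ← hτ]
    simp only [mulVec_add, mulVec_smul]
    module
end

section
/- Let r : ℤ → ℝ² be a nondegenerate discrete planar curve which is closed with period 6. Then the opposite sides of the hexagon are pairwise parallel and of equal length, i.e. t_{k+3} = −t_k for all k ∈ ℤ, if and only if for every n ∈ ℤ the centroaffine curvatures satisfy κ_n = κ_{n+3}, κ_n · κ̄_{n+1} = 1, and κ_n · κ_{n+1} · κ_{n+2} = 1. -/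
/-!
Writing `D k = det(t_{k-1}, t_k)`, the conditions `κ_n κ̄_{n+1} = 1` and `κ_n κ_{n+1} κ_{n+2} = 1`
say exactly that `det(t_n, t_{n+2}) = D n` and `D (n+3) = D n`. For antiperiodic tangents
`t_{k+3} = -t_k` these identities, and `κ_{n+3} = κ_n`, are immediate since determinants are
invariant under `(u, v) ↦ (-u, -v)`. Conversely, they give `det(t_{k+1}, t_k + t_{k+3}) = 0` and
`det(t_{k+2}, t_k + t_{k+3}) = 0`, and since `t_{k+1}, t_{k+2}` form a basis, `t_k + t_{k+3} = 0`.
-/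

lemma det2_neg_left (u v : Fin 2 → ℝ) : det2 (-u) v = -det2 u v := by
  simp only [det2, Pi.neg_apply]; ring

lemma det2_neg_right (u v : Fin 2 → ℝ) : det2 u (-v) = -det2 u v := by
  simp only [det2, Pi.neg_apply]; ring

lemma det2_swap (u v : Fin 2 → ℝ) : det2 v u = -det2 u v := by
  simp only [det2]; ring

lemma det2_add_right (u v w : Fin 2 → ℝ) : det2 u (v + w) = det2 u v + det2 u w := by
  simp only [det2, Pi.add_apply]; ring

/-- Cramer's rule. -/
lemma det2_smul_eq_add (a b s : Fin 2 → ℝ) :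
    det2 a b • s = det2 s b • a + det2 a s • b := by
  funext i
  fin_cases i <;>
    simp only [det2, Fin.zero_eta, Fin.mk_one, Pi.add_apply, Pi.smul_apply, smul_eq_mul] <;> ring

lemma eq_zero_of_det2_eq_zero {a b s : Fin 2 → ℝ} (hab : det2 a b ≠ 0)
    (ha : det2 a s = 0) (hb : det2 b s = 0) : s = 0 := by
  have hsb : det2 s b = 0 := by rw [det2_swap, hb, neg_zero]
  have h := det2_smul_eq_add a b s
  rw [hsb, ha, zero_smul, zero_smul, add_zero] at h
  exact (smul_eq_zero.mp h).resolve_left hab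

section Curve

variable {r : ℤ → Fin 2 → ℝ}

lemma det2_tang2_ne_zero (hr : Nondeg2 r) (n : ℤ) :
    det2 (tang2 r n) (tang2 r (n + 1)) ≠ 0 := by
  simpa using hr (n + 1)

lemma kappa2_mul_kbar2_add_one (hr : Nondeg2 r) (n : ℤ) :
    kappa2 r n * kbar2 r (n + 1) =
      det2 (tang2 r n) (tang2 r (n + 2)) / det2 (tang2 r (n - 1)) (tang2 r n) := by
  have := det2_tang2_ne_zero hr n
  rw [kappa2, kbar2, add_sub_cancel_right, add_assoc, one_add_one_eq_two]
  field_simp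

lemma kappa2_mul_kappa2_mul_kappa2 (hr : Nondeg2 r) (n : ℤ) :
    kappa2 r n * kappa2 r (n + 1) * kappa2 r (n + 2) =
      det2 (tang2 r (n + 2)) (tang2 r (n + 3)) / det2 (tang2 r (n - 1)) (tang2 r n) := by
  have h₀ := det2_tang2_ne_zero hr n
  have h₁ := det2_tang2_ne_zero hr (n + 1)
  simp only [kappa2, add_sub_cancel_right, show n + 2 - 1 = n + 1 by ring,
    show n + 1 + 1 = n + 2 by ring, show n + 2 + 1 = n + 3 by ring] at h₁ ⊢
  field_simp

lemma kappa2_add_of_tang2_add_eq_neg {p : ℤ} (h : ∀ k, tang2 r (k + p) = -tang2 r k) (n : ℤ) :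
    kappa2 r (n + p) = kappa2 r n := by
  simp only [kappa2, show n + p + 1 = n + 1 + p by ring, show n + p - 1 = n - 1 + p by ring, h,
    det2_neg_left, det2_neg_right, neg_neg]

lemma tang2_add_three_eq_neg (hr : Nondeg2 r)
    (h₂ : ∀ n, det2 (tang2 r n) (tang2 r (n + 2)) = det2 (tang2 r (n - 1)) (tang2 r n))
    (h₃ : ∀ n, det2 (tang2 r (n + 2)) (tang2 r (n + 3)) = det2 (tang2 r (n - 1)) (tang2 r n))
    (k : ℤ) : tang2 r (k + 3) = -tang2 r k := by
  have hperp₁ : det2 (tang2 r (k + 1)) (tang2 r k + tang2 r (k + 3)) = 0 := by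
    have := h₂ (k + 1)
    rw [show k + 1 + 2 = k + 3 by ring, add_sub_cancel_right] at this
    rw [det2_add_right, this, det2_swap, neg_add_cancel]
  have hperp₂ : det2 (tang2 r (k + 2)) (tang2 r k + tang2 r (k + 3)) = 0 := by
    rw [det2_add_right, det2_swap, h₂, h₃, neg_add_cancel]
  have hbasis : det2 (tang2 r (k + 1)) (tang2 r (k + 2)) ≠ 0 := by
    simpa [add_assoc, one_add_one_eq_two] using det2_tang2_ne_zero hr (k + 1)
  exact eq_neg_of_add_eq_zero_right (eq_zero_of_det2_eq_zero hbasis hperp₁ hperp₂)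

end Curve

theorem stmt_12_general (r : ℤ → Fin 2 → ℝ) (hr : Nondeg2 r) :
    (∀ k : ℤ, tang2 r (k + 3) = -tang2 r k) ↔
      ∀ n : ℤ, kappa2 r n = kappa2 r (n + 3) ∧
        kappa2 r n * kbar2 r (n + 1) = 1 ∧
        kappa2 r n * kappa2 r (n + 1) * kappa2 r (n + 2) = 1 := by
  simp only [kappa2_mul_kbar2_add_one hr, kappa2_mul_kappa2_mul_kappa2 hr,
    div_eq_one_iff_eq (hr _)]
  constructor
  · intro h n
    have h₂ : tang2 r (n + 2) = -tang2 r (n - 1) := by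
      rw [← h (n - 1)]; ring_nf
    refine ⟨(kappa2_add_of_tang2_add_eq_neg h n).symm, ?_, ?_⟩
    · rw [h₂, det2_neg_right, det2_swap, neg_neg]
    · rw [h n, h₂, det2_neg_left, det2_neg_right, neg_neg]
  · intro H
    exact tang2_add_three_eq_neg hr (fun n => (H n).2.1) (fun n => (H n).2.2)

/-- Characterization of hexagons with parallel, equi-length opposite sides by their
centroaffine curvatures. -/
theorem stmt_12 (r : ℤ → Fin 2 → ℝ) (hr : Nondeg2 r)
    (hclosed : ∀ k : ℤ, r (k + 6) = r k) :
    (∀ k : ℤ, tang2 r (k + 3) = -tang2 r k) ↔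
      ∀ n : ℤ, kappa2 r n = kappa2 r (n + 3) ∧
        kappa2 r n * kbar2 r (n + 1) = 1 ∧
        kappa2 r n * kappa2 r (n + 1) * kappa2 r (n + 2) = 1 :=
  stmt_12_general r hr
end

section
/- Let p ≥ 4 be an integer and let r : ℤ → ℝ³ be a nondegenerate discrete centroaffine space curve which is closed with period p and satisfies τ_n = 0 for all n (a planar closed p-gon), with curvatures κ_n, κ̄_n (which are p-periodic). Define the p×p real matrix S, with rows and columns indexed by ℤ/pℤ, by S(n, n−1) = κ_n, S(n, n) = −κ_n − κ̄_n, S(n, n+1) = 1 + κ̄_n, S(n, n+2) = −1, and all other entries 0 (indices taken modulo p). Then the rank of S equals p − 3; equivalently, the kernel of S is the 3-dimensional space spanned by the three coordinate sequences n ↦ (r(n))_i, i = 1, 2, 3. -/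
/-!
Vanishing torsion makes `r (k - 1), …, r (k + 2)` coplanar, and Cramer's rule then gives the
recurrence `r (k + 2) = κ_k r (k - 1) + (-κ_k - κ̄_k) r k + (1 + κ̄_k) r (k + 1)`. Row `n` of `S`
is exactly this recurrence, so by closedness the three coordinate sequences of `r` lie in
`ker S`, and they are independent because `r 0, r 1, r 2` are. Conversely, the entry `-1` in
column `n + 2` means a kernel vector is determined by its values at `0, 1, 2`. Hence
`dim ker S = 3`, and rank–nullity gives `rank S = p - 3`.
-/

open Matrix Module

lemma Function.Periodic.apply_val_intCast {α : Type*} {p : ℕ} [NeZero p] {f : ℤ → α}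
    (hf : Function.Periodic f p) (z : ℤ) : f (z : ZMod p).val = f z := by
  rw [ZMod.val_intCast, Int.emod_def, mul_comm]; exact hf.sub_int_mul_eq _

lemma Function.Periodic.apply_val_add_intCast {α : Type*} {p : ℕ} [NeZero p] {f : ℤ → α}
    (hf : Function.Periodic f p) (n : ZMod p) (k : ℤ) : f (n + k).val = f (n.val + k) := by
  rw [← hf.apply_val_intCast (n.val + k)]
  simp

lemma det3_mul_apply (a b c d : Fin 3 → ℝ) (i : Fin 3) :
    det3 a b c * d i = det3 b c d * a i - det3 a c d * b i + det3 a b d * c i := by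
  fin_cases i <;> simp [det3, det_fin_three] <;> ring

lemma apply_add_two_of_tau3_eq_zero {r : ℤ → Fin 3 → ℝ} {k : ℤ}
    (hD : det3 (r (k - 1)) (r k) (r (k + 1)) ≠ 0) (hτ : tau3 r k = 0) :
    r (k + 2) = kappa3 r k • r (k - 1) + (-kappa3 r k - kbar3 r k) • r k
      + (1 + kbar3 r k) • r (k + 1) := by
  have hprev : tang3 r (k - 1) = r k - r (k - 1) := by simp [tang3]
  have hnext : tang3 r (k + 1) = r (k + 2) - r (k + 1) := by simp [tang3]; ring_nf
  rw [tau3, div_eq_zero_iff, or_iff_left hD] at hτ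
  simp only [kappa3, kbar3, hprev, hnext] at hτ ⊢
  rw [tang3] at hτ ⊢
  set a := r (k - 1)
  set b := r k
  set c := r (k + 1)
  set d := r (k + 2)
  have hden : det3 b (b - a) (c - b) = det3 a b c := by
    simp [det3, det_fin_three]; ring
  have hnum : det3 c (b - a) (d - c) = det3 a c d - det3 b c d := by
    simp [det3, det_fin_three]; ring
  have hτ' : det3 (b - a) (c - b) (d - c) = det3 b c d - det3 a c d + det3 a b d - det3 a b c := by
    simp [det3, det_fin_three]; ring
  funext i
  have hcr := det3_mul_apply a b c d i
  rw [hden, hnum]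
  simp only [Pi.add_apply, Pi.smul_apply, smul_eq_mul]
  field_simp
  linear_combination hcr + c i * (hτ'.symm.trans hτ)

section CyclicBand

variable {K : Type*} [Field K] {p : ℕ} [NeZero p]

def cyclicBand (a b c d : ZMod p → K) : Matrix (ZMod p) (ZMod p) K :=
  of fun n m => if m = n - 1 then a n else if m = n then b n else if m = n + 1 then c n
    else if m = n + 2 then d n else 0

omit [NeZero p] in
lemma ZMod.natCast_ne_zero_of_lt {k : ℕ} (h0 : k ≠ 0) (hk : k < p) : (k : ZMod p) ≠ 0 := by
  rw [Ne, ZMod.natCast_eq_zero_iff]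
  exact fun h => h0 (Nat.eq_zero_of_dvd_of_lt h hk)

lemma cyclicBand_mulVec_apply (hp : 4 ≤ p) (a b c d : ZMod p → K) (v : ZMod p → K)
    (n : ZMod p) :
    (cyclicBand a b c d *ᵥ v) n = a n * v (n - 1) + b n * v n + c n * v (n + 1)
      + d n * v (n + 2) := by
  have h1 : (1 : ZMod p) ≠ 0 := by
    exact_mod_cast ZMod.natCast_ne_zero_of_lt one_ne_zero (by omega)
  have h2 : (2 : ZMod p) ≠ 0 := by
    exact_mod_cast ZMod.natCast_ne_zero_of_lt two_ne_zero (by omega)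
  have h3 : (3 : ZMod p) ≠ 0 := by
    exact_mod_cast ZMod.natCast_ne_zero_of_lt three_ne_zero (by omega)
  have e01 : n - 1 ≠ n := fun h => h1 (by linear_combination -h)
  have e02 : n - 1 ≠ n + 1 := fun h => h2 (by linear_combination -h)
  have e03 : n - 1 ≠ n + 2 := fun h => h3 (by linear_combination -h)
  have e12 : n ≠ n + 1 := fun h => h1 (by linear_combination -h)
  have e13 : n ≠ n + 2 := fun h => h2 (by linear_combination -h)
  have e23 : n + 1 ≠ n + 2 := fun h => h1 (by linear_combination -h)
  have hsplit : ∀ m, cyclicBand a b c d n m * v m = (if m = n - 1 then a n * v (n - 1) else 0)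
      + (if m = n then b n * v n else 0) + (if m = n + 1 then c n * v (n + 1) else 0)
      + (if m = n + 2 then d n * v (n + 2) else 0) := by
    intro m
    simp only [cyclicBand, of_apply]
    by_cases ha : m = n - 1
    · subst ha; simp [e01, e02, e03]
    by_cases hb : m = n
    · subst hb; simp [ha, e12, e13]
    by_cases hc : m = n + 1
    · subst hc; simp [ha, hb, e23]
    by_cases hd : m = n + 2
    · subst hd; simp [ha, hb, hc]
    simp [ha, hb, hc, hd]
  simp only [mulVec, dotProduct, hsplit, Finset.sum_add_distrib, Finset.sum_ite_eq',
    Finset.mem_univ, if_true]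

lemma eq_zero_of_cyclicBand_mulVec_eq_zero (hp : 4 ≤ p) {a b c d v : ZMod p → K}
    (hd : ∀ n, d n ≠ 0) (hv : cyclicBand a b c d *ᵥ v = 0) (h0 : v 0 = 0) (h1 : v 1 = 0)
    (h2 : v 2 = 0) : v = 0 := by
  have hvanish : ∀ j : ℕ, v j = 0 ∧ v (j + 1) = 0 ∧ v (j + 2) = 0 := by
    intro j
    induction j with
    | zero => simpa using ⟨h0, h1, h2⟩
    | succ j ih =>
      obtain ⟨hj, hj1, hj2⟩ := ih
      have e2 : (j : ZMod p) + 1 + 1 = j + 2 := by ring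
      have e3 : (j : ZMod p) + 1 + 2 = j + 3 := by ring
      have hrow := congrFun hv (j + 1)
      rw [cyclicBand_mulVec_apply hp, add_sub_cancel_right, e2, e3, hj, hj1, hj2] at hrow
      have hj3 : v (j + 3) = 0 := by simpa [hd] using hrow
      push_cast
      rw [e2, e3]
      exact ⟨hj1, hj2, hj3⟩
  funext n
  simpa using (hvanish n.val).1

lemma finrank_ker_cyclicBand_le (hp : 4 ≤ p) {a b c d : ZMod p → K} (hd : ∀ n, d n ≠ 0) :
    finrank K (LinearMap.ker (cyclicBand a b c d).mulVecLin) ≤ 3 := by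
  let restrict := LinearMap.funLeft K K (fun j : Fin 3 => ((j : ℕ) : ZMod p)) ∘ₗ
    (LinearMap.ker (cyclicBand a b c d).mulVecLin).subtype
  have hinj : Function.Injective restrict := by
    refine (injective_iff_map_eq_zero restrict).2 fun ⟨v, hv⟩ h => ?_
    have hj (j : Fin 3) : v j = 0 := congrFun h j
    simpa using eq_zero_of_cyclicBand_mulVec_eq_zero hp hd hv (by simpa using hj 0)
      (by simpa using hj 1) (by simpa using hj 2)
  simpa using LinearMap.finrank_le_finrank_of_injective hinj

end CyclicBand

lemma card_le_finrank_ker_mulVecLin {K m n ι : Type*} [Field K] [Fintype m] [Fintype n]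
    [Fintype ι] [DecidableEq ι] {M : Matrix m n K} (R : Matrix n ι K) (hMR : M * R = 0)
    (f : ι → n) (hR : (R.submatrix f id).det ≠ 0) :
    Fintype.card ι ≤ finrank K (LinearMap.ker M.mulVecLin) := by
  have hR' : Function.Injective R.mulVecLin := by
    intro x y hxy
    apply mulVec_injective_iff_isUnit.2 ((isUnit_iff_isUnit_det _).2 hR.isUnit)
    funext i
    exact congrFun hxy (f i)
  let g := R.mulVecLin.codRestrict (LinearMap.ker M.mulVecLin) fun c => by
    simp [mulVec_mulVec, hMR]
  simpa using LinearMap.finrank_le_finrank_of_injective (f := g)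
    fun x y hxy => hR' (congrArg Subtype.val hxy)

lemma rank_eq_card_sub_finrank_ker {K n : Type*} [Field K] [Fintype n] [DecidableEq n]
    (M : Matrix n n K) : M.rank = Fintype.card n - finrank K (LinearMap.ker M.mulVecLin) := by
  have := LinearMap.finrank_range_add_finrank_ker M.mulVecLin
  rw [finrank_fintype_fun_eq_card] at this
  rw [rank]
  omega

lemma cyclicBand_curvatures_mul_coords_eq_zero {p : ℕ} [NeZero p] (hp : 4 ≤ p)
    {r : ℤ → Fin 3 → ℝ} (hr : Nondeg3 r) (hclosed : Function.Periodic r p)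
    (hτ : ∀ n, tau3 r n = 0) :
    cyclicBand (fun n : ZMod p => kappa3 r n.val) (fun n => -kappa3 r n.val - kbar3 r n.val)
      (fun n => 1 + kbar3 r n.val) (fun _ => -1) *
      of (fun (n : ZMod p) (i : Fin 3) => r n.val i) = 0 := by
  ext n i
  change (cyclicBand _ _ _ _ *ᵥ fun m : ZMod p => r m.val i) n = 0
  have hprev := hclosed.apply_val_add_intCast n (-1)
  have hnext := hclosed.apply_val_add_intCast n 1
  have hnext₂ := hclosed.apply_val_add_intCast n 2
  push_cast [← sub_eq_add_neg] at hprev hnext hnext₂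
  rw [cyclicBand_mulVec_apply hp, hprev, hnext, hnext₂,
    apply_add_two_of_tau3_eq_zero (hr _) (hτ _)]
  simp only [Pi.add_apply, Pi.smul_apply, smul_eq_mul]
  ring

lemma det_submatrix_coords {p : ℕ} [NeZero p] (hp : 3 ≤ p) (r : ℤ → Fin 3 → ℝ) :
    ((of fun (n : ZMod p) (i : Fin 3) => r n.val i).submatrix
      (fun j : Fin 3 => ((j : ℕ) : ZMod p)) id).det = det3 (r 0) (r 1) (r 2) := by
  have hval (j : Fin 3) : ((j : ℕ) : ZMod p).val = j := ZMod.val_cast_of_lt (by omega)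
  rw [det3]
  congr 1
  ext j i
  rw [submatrix_apply, of_apply, id, hval]
  fin_cases j <;> rfl

/-- For a planar closed `p`-gon (`τ ≡ 0`), the cyclic structure matrix `S` built from
the centroaffine curvatures has rank `p - 3`. -/
theorem stmt_14 (p : ℕ) [NeZero p] (hp : 4 ≤ p) (r : ℤ → Fin 3 → ℝ) (hr : Nondeg3 r)
    (hclosed : ∀ k : ℤ, r (k + p) = r k) (hτ : ∀ n : ℤ, tau3 r n = 0) :
    (Matrix.of fun n m : ZMod p =>
      if m = n - 1 then kappa3 r (n.val : ℤ)
      else if m = n then -kappa3 r (n.val : ℤ) - kbar3 r (n.val : ℤ)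
      else if m = n + 1 then 1 + kbar3 r (n.val : ℤ)
      else if m = n + 2 then (-1 : ℝ)
      else 0).rank = p - 3 := by
  have hdet : ((of fun (n : ZMod p) (i : Fin 3) => r n.val i).submatrix
      (fun j : Fin 3 => ((j : ℕ) : ZMod p)) id).det ≠ 0 := by
    rw [det_submatrix_coords (by omega)]
    simpa using hr 1
  have hge := card_le_finrank_ker_mulVecLin _
    (cyclicBand_curvatures_mul_coords_eq_zero hp hr hclosed hτ) _ hdet
  rw [Fintype.card_fin] at hge
  have hker := le_antisymm (finrank_ker_cyclicBand_le hp fun _ => neg_ne_zero.2 one_ne_zero) hge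
  change (cyclicBand _ _ _ _).rank = _
  rw [rank_eq_card_sub_finrank_ker, hker, ZMod.card]
end

section
/- Let p ≥ 5 be an integer and let r : ℤ → ℝ² be a nondegenerate discrete planar curve, closed with period p, with constant curvatures κ_n = 1 and κ̄_n = 2·cos(2π/p) for all n (an affinely regular convex p-gon). Define the pentagram map image T(r)(k) = r(k) + (1/(1 + κ_k + κ̄_k)) · (r(k+2) − r(k)). Then T(r) is again a nondegenerate discrete planar curve closed with period p, with the same constant curvatures κ'_n = 1 and κ̄'_n = 2·cos(2π/p); that is, affinely regular polygons are stable under the pentagram map. -/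
/-- The pentagram map, expressed in centroaffine invariants. -/
noncomputable def pentagram (r : ℤ → Fin 2 → ℝ) (k : ℤ) : Fin 2 → ℝ :=
  r k + (1 / (1 + kappa2 r k + kbar2 r k)) • (r (k + 2) - r k)

open Real

def IsTangentRec (c : ℝ) (t : ℤ → Fin 2 → ℝ) : Prop :=
  ∀ k, t (k + 1) = c • t k - t (k - 1)

lemma det2_self_smul_sub (c : ℝ) (a b : Fin 2 → ℝ) : det2 b (c • b - a) = det2 a b := by
  simp only [det2, Pi.sub_apply, Pi.smul_apply, smul_eq_mul]; ring

lemma det2_smul_sub_self (c : ℝ) (a b : Fin 2 → ℝ) : det2 a (c • b - a) = c * det2 a b := by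
  simp only [det2, Pi.sub_apply, Pi.smul_apply, smul_eq_mul]; ring

lemma eq_of_det2_eq {a b v w : Fin 2 → ℝ} (hab : det2 a b ≠ 0)
    (ha : det2 a v = det2 a w) (hb : det2 b v = det2 b w) : v = w := by
  simp only [det2] at hab ha hb
  have h0 : v 0 = w 0 := mul_left_cancel₀ hab (by linear_combination b 0 * ha - a 0 * hb)
  have h1 : v 1 = w 1 := mul_left_cancel₀ hab (by linear_combination b 1 * ha - a 1 * hb)
  ext i
  fin_cases i
  exacts [h0, h1]

section Curvature

variable {r : ℤ → Fin 2 → ℝ} {c : ℝ}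

lemma isTangentRec_of_curvature (hr : Nondeg2 r) (hκ : ∀ k, kappa2 r k = 1)
    (hκbar : ∀ k, kbar2 r k = c) : IsTangentRec c (tang2 r) := by
  intro k
  refine eq_of_det2_eq (hr k) ?_ ?_
  · rw [det2_smul_sub_self, ← (div_eq_iff (hr k)).1 (hκbar k)]
  · rw [det2_self_smul_sub, (div_eq_one_iff_eq (hr k)).1 (hκ k)]

lemma kappa2_eq_one_of_isTangentRec (hr : Nondeg2 r) (ht : IsTangentRec c (tang2 r)) (k : ℤ) :
    kappa2 r k = 1 := by
  rw [kappa2, ht k, det2_self_smul_sub, div_self (hr k)]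

lemma kbar2_eq_of_isTangentRec (hr : Nondeg2 r) (ht : IsTangentRec c (tang2 r)) (k : ℤ) :
    kbar2 r k = c := by
  rw [kbar2, ht k, det2_smul_sub_self, mul_div_cancel_right₀ _ (hr k)]

end Curvature

namespace IsTangentRec

variable {t s : ℤ → Fin 2 → ℝ} {c μ : ℝ}

lemma of_smul_add_succ (ht : IsTangentRec c t) (hs : ∀ k, s k = μ • (t k + t (k + 1))) :
    IsTangentRec c s := by
  intro k
  rw [hs, hs, hs, sub_add_cancel, ht (k + 1), add_sub_cancel_right, ht k]
  module

lemma det2_of_smul_add_succ (ht : IsTangentRec c t) (hs : ∀ k, s k = μ • (t k + t (k + 1)))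
    (k : ℤ) : det2 (s (k - 1)) (s k) = μ ^ 2 * (2 + c) * det2 (t (k - 1)) (t k) := by
  rw [hs, hs, sub_add_cancel, ht k]
  simp only [det2, Pi.add_apply, Pi.sub_apply, Pi.smul_apply, smul_eq_mul]
  ring

end IsTangentRec

section Pentagram

variable {r : ℤ → Fin 2 → ℝ}

lemma tang2_add_period {p : ℤ} (hr : ∀ k, r (k + p) = r k) (k : ℤ) :
    tang2 r (k + p) = tang2 r k := by
  rw [tang2, add_right_comm, hr, hr, tang2]

lemma pentagram_add_period {p : ℤ} (hr : ∀ k, r (k + p) = r k) (k : ℤ) :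
    pentagram r (k + p) = pentagram r k := by
  have ht := tang2_add_period hr
  have hκ : kappa2 r (k + p) = kappa2 r k := by
    rw [kappa2, kappa2, ht, add_right_comm k p 1, ht, ← sub_add_eq_add_sub, ht]
  have hκbar : kbar2 r (k + p) = kbar2 r k := by
    rw [kbar2, kbar2, add_right_comm k p 1, ht, ← sub_add_eq_add_sub, ht, ht]
  rw [pentagram, pentagram, hκ, hκbar, hr, add_right_comm k p 2, hr]

variable {c : ℝ}

lemma pentagram_of_curvature (hκ : ∀ k, kappa2 r k = 1) (hκbar : ∀ k, kbar2 r k = c) (k : ℤ) :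
    pentagram r k = r k + (2 + c)⁻¹ • (r (k + 2) - r k) := by
  rw [pentagram, hκ, hκbar, one_add_one_eq_two, one_div]

lemma tang2_pentagram (hc : 2 + c ≠ 0) (hκ : ∀ k, kappa2 r k = 1) (hκbar : ∀ k, kbar2 r k = c)
    (ht : IsTangentRec c (tang2 r)) (k : ℤ) :
    tang2 (pentagram r) k = (c / (2 + c)) • (tang2 r k + tang2 r (k + 1)) := by
  have h2 : tang2 r (k + 2) = c • tang2 r (k + 1) - tang2 r k := by
    simpa [add_assoc] using ht (k + 1)
  have hsecant : tang2 (pentagram r) k =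
      tang2 r k + (2 + c)⁻¹ • (tang2 r (k + 2) - tang2 r k) := by
    simp only [tang2, pentagram_of_curvature hκ hκbar, add_right_comm k 1 2, add_assoc k 2 1]
    module
  rw [hsecant, h2]
  match_scalars
  · field_simp; ring
  · field_simp

end Pentagram

lemma cos_two_pi_div_pos {x : ℝ} (hx : 4 < x) : 0 < cos (2 * π / x) := by
  apply cos_pos_of_mem_Ioo
  constructor
  · have : 0 < 2 * π / x := by positivity
    linarith [pi_pos]
  · rw [div_lt_iff₀ (by linarith)]
    nlinarith [pi_pos]

open Real in
/-- Affinely regular convex polygons are stable under the pentagram map. -/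
theorem stmt_17 (p : ℕ) (hp : 5 ≤ p) (r : ℤ → Fin 2 → ℝ) (hr : Nondeg2 r)
    (hclosed : ∀ k : ℤ, r (k + p) = r k)
    (hκ : ∀ n : ℤ, kappa2 r n = 1)
    (hκbar : ∀ n : ℤ, kbar2 r n = 2 * Real.cos (2 * π / p)) :
    Nondeg2 (pentagram r) ∧
      (∀ k : ℤ, pentagram r (k + p) = pentagram r k) ∧
      (∀ n : ℤ, kappa2 (pentagram r) n = 1) ∧
      (∀ n : ℤ, kbar2 (pentagram r) n = 2 * Real.cos (2 * π / p)) := by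
  set c := 2 * cos (2 * π / p)
  have hc : 0 < c := by
    have := cos_two_pi_div_pos (x := p) (by exact_mod_cast hp)
    positivity
  have ht := isTangentRec_of_curvature hr hκ hκbar
  have hs := tang2_pentagram (by positivity) hκ hκbar ht
  have hnd : Nondeg2 (pentagram r) := fun k ↦ by
    rw [ht.det2_of_smul_add_succ hs]
    exact mul_ne_zero (by positivity) (hr k)
  have hts := ht.of_smul_add_succ hs
  exact ⟨hnd, pentagram_add_period hclosed, kappa2_eq_one_of_isTangentRec hnd hts,
    kbar2_eq_of_isTangentRec hnd hts⟩
end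

section
/- Let p be a positive integer and let r : ℤ → ℝ² be a nondegenerate discrete planar curve with t_{k+p} = −t_k and κ̄_k ≠ 0 for all k ∈ ℤ (a 2p-gon whose opposite sides are parallel and of equal length). Define the inverse pentagram map image r'(k) = r(k) + (κ_k/κ̄_k) · (r(k) − r(k−1)), with edge tangent vectors t'_k = r'(k+1) − r'(k). Then t'_k = (1 + κ_{k+1}/κ̄_{k+1})·t_k − (κ_k/κ̄_k)·t_{k−1} and t'_{k+p} = −t'_k for all k ∈ ℤ; that is, the image again has parallel and equi-length opposite sides. -/
/-- The inverse pentagram map, expressed in centroaffine invariants. -/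
noncomputable def invPentagram (r : ℤ → Fin 2 → ℝ) (k : ℤ) : Fin 2 → ℝ :=
  r k + (kappa2 r k / kbar2 r k) • (r k - r (k - 1))

lemma det2_neg_neg (u v : Fin 2 → ℝ) : det2 (-u) (-v) = det2 u v := by
  simp [det2]

/-- The inverse pentagram map preserves the class of polygons with parallel,
equi-length opposite sides. -/
theorem stmt_18 (p : ℕ) (hp : 0 < p) (r : ℤ → Fin 2 → ℝ) (hr : Nondeg2 r)
    (hopp : ∀ k : ℤ, tang2 r (k + p) = -tang2 r k)
    (hκbar : ∀ k : ℤ, kbar2 r k ≠ 0) :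
    ∀ k : ℤ,
      tang2 (invPentagram r) k =
        (1 + kappa2 r (k + 1) / kbar2 r (k + 1)) • tang2 r k -
          (kappa2 r k / kbar2 r k) • tang2 r (k - 1) ∧
      tang2 (invPentagram r) (k + p) = -tang2 (invPentagram r) k := by
  have htang : ∀ k : ℤ, tang2 r (k + p) = -tang2 r k := hopp
  have hκ : ∀ k : ℤ, kappa2 r (k + p) = kappa2 r k := by
    intro k
    have h1 : tang2 r (k + p - 1) = -tang2 r (k - 1) := by
      rw [show (k : ℤ) + p - 1 = k - 1 + p by ring]; exact htang (k - 1)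
    have h2 : tang2 r (k + p + 1) = -tang2 r (k + 1) := by
      rw [show (k : ℤ) + p + 1 = k + 1 + p by ring]; exact htang (k + 1)
    unfold kappa2
    rw [h1, h2, htang k, det2_neg_neg, det2_neg_neg]
  have hκb : ∀ k : ℤ, kbar2 r (k + p) = kbar2 r k := by
    intro k
    have h1 : tang2 r (k + p - 1) = -tang2 r (k - 1) := by
      rw [show (k : ℤ) + p - 1 = k - 1 + p by ring]; exact htang (k - 1)
    have h2 : tang2 r (k + p + 1) = -tang2 r (k + 1) := by
      rw [show (k : ℤ) + p + 1 = k + 1 + p by ring]; exact htang (k + 1)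
    unfold kbar2
    rw [h1, h2, htang k, det2_neg_neg, det2_neg_neg]
  have main : ∀ k : ℤ,
      tang2 (invPentagram r) k =
        (1 + kappa2 r (k + 1) / kbar2 r (k + 1)) • tang2 r k -
          (kappa2 r k / kbar2 r k) • tang2 r (k - 1) := by
    intro k
    funext i
    simp only [tang2, invPentagram, add_sub_cancel_right, Pi.add_apply, Pi.sub_apply,
      Pi.smul_apply, smul_eq_mul]
    ring
  intro k
  refine ⟨main k, ?_⟩
  have h1 : tang2 r (k + p - 1) = -tang2 r (k - 1) := by
    rw [show (k : ℤ) + p - 1 = k - 1 + p by ring]; exact htang (k - 1)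
  have h2 : kappa2 r (k + p + 1) = kappa2 r (k + 1) := by
    rw [show (k : ℤ) + p + 1 = k + 1 + p by ring]; exact hκ (k + 1)
  have h3 : kbar2 r (k + p + 1) = kbar2 r (k + 1) := by
    rw [show (k : ℤ) + p + 1 = k + 1 + p by ring]; exact hκb (k + 1)
  rw [main (k + p), main k, h1, h2, h3, hκ k, hκb k, htang k]
  funext i
  simp only [Pi.add_apply, Pi.sub_apply, Pi.smul_apply, Pi.neg_apply, smul_eq_mul]
  ring
end
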